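/- arXiv:1012.2111 — 3 statements merged into one kernel-verified Lean document; each statement's English description precedes it below -/
import Mathlib

section
/- Consequently: if T : B(H) → B(H) is a unital completely positive map, (p, K, B, θ) is a dilation of T in the weak sense that T(a) = p θ(a) p for all a ∈ pBp ≅ B(H), and each θ is a *-endomorphism with θ(1)=1, then the dilation is automatically strong: T(p b p) = p θ(b) p for all b ∈ B. -/
/-!
Since `θ` is multiplicative and `*`-preserving, `θ p` is a projection, and the weak dilation
property at `p` gives `p * θ p * p = T p = p`. In a C⋆-algebra this forces `θ p ≥ p`, i.e.
`θ p * p = p = p * θ p`, so that `p * θ (p * b * p) * p = p * θ p * θ b * θ p * p = p * θ b * p`;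
the weak dilation property at the corner element `p * b * p` then gives the claim.
-/

namespace IsStarProjection

variable {R : Type*}

theorem map_of_map_mul_of_map_star {S : Type*} [Mul R] [Star R] [Mul S] [Star S]
    {f : R → S} (hmul : ∀ a b, f (a * b) = f a * f b) (hstar : ∀ a, f (star a) = star (f a))
    {p : R} (hp : IsStarProjection p) : IsStarProjection (f p) where
  isIdempotentElem := by rw [IsIdempotentElem, ← hmul, hp.isIdempotentElem.eq]
  isSelfAdjoint := by rw [IsSelfAdjoint, ← hstar, hp.isSelfAdjoint.star_eq]

variable [NonUnitalNormedRing R] [StarRing R] [CStarRing R] {p q : R}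

/-- The C⋆-identity applied to the defect: `star (q * p - p) * (q * p - p) = p * q * p - p = 0`. -/
theorem mul_eq_right_of_mul_mul_eq (hp : IsStarProjection p) (hq : IsStarProjection q)
    (h : p * q * p = p) : q * p = p := by
  have hp2 : p * p = p := hp.isIdempotentElem.eq
  have hq2 : q * q = q := hq.isIdempotentElem.eq
  have hdefect : star (q * p - p) * (q * p - p) = 0 := by
    rw [star_sub, star_mul, hp.isSelfAdjoint.star_eq, hq.isSelfAdjoint.star_eq]
    calc (p * q - p) * (q * p - p) = p * (q * q) * p - p * q * p - p * q * p + p * p := by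
          noncomm_ring
      _ = 0 := by rw [hq2, h, hp2]; abel
  exact sub_eq_zero.mp (CStarRing.star_mul_self_eq_zero_iff _ |>.mp hdefect)

theorem mul_eq_left_of_mul_mul_eq (hp : IsStarProjection p) (hq : IsStarProjection q)
    (h : p * q * p = p) : p * q = p := by
  simpa [hp.isSelfAdjoint.star_eq, hq.isSelfAdjoint.star_eq] using
    congr(star $(hp.mul_eq_right_of_mul_mul_eq hq h))

end IsStarProjection

theorem IsIdempotentElem.mul_mul_mul_mul_mul {R : Type*} [Semigroup R] {p : R}
    (hp : IsIdempotentElem p) (x : R) : p * (p * x * p) * p = p * x * p := by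
  simp only [← mul_assoc, hp.eq]
  rw [mul_assoc _ p p, hp.eq]

theorem unital_dilation_is_strong_general
    {K : Type*} [NormedAddCommGroup K] [InnerProductSpace ℂ K] [CompleteSpace K]
    (B : StarSubalgebra ℂ (K →L[ℂ] K))
    (p : K →L[ℂ] K) (hpB : p ∈ B) (hp : IsSelfAdjoint p) (hp2 : p * p = p)
    (θ : (K →L[ℂ] K) → (K →L[ℂ] K))
    (hθmul : ∀ a b, θ (a * b) = θ a * θ b)
    (hθstar : ∀ a, θ (star a) = star (θ a))
    (T : (K →L[ℂ] K) → (K →L[ℂ] K))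
    (hTunital : T p = p)
    (hweak : ∀ a ∈ B, a = p * a * p → T a = p * θ a * p) :
    ∀ b ∈ B, T (p * b * p) = p * θ b * p := by
  intro b hb
  have hpproj : IsStarProjection p := ⟨hp2, hp⟩
  have hθpproj : IsStarProjection (θ p) := hpproj.map_of_map_mul_of_map_star hθmul hθstar
  have hpθpp : p * θ p * p = p := (hweak p hpB (by rw [hp2, hp2])).symm.trans hTunital
  have hθpp : θ p * p = p := hpproj.mul_eq_right_of_mul_mul_eq hθpproj hpθpp
  have hpθp : p * θ p = p := hpproj.mul_eq_left_of_mul_mul_eq hθpproj hpθpp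
  calc T (p * b * p) = p * θ (p * b * p) * p :=
        hweak _ (mul_mem (mul_mem hpB hb) hpB) (hpproj.isIdempotentElem.mul_mul_mul_mul_mul b).symm
    _ = (p * θ p) * θ b * (θ p * p) := by rw [hθmul, hθmul]; noncomm_ring
    _ = p * θ b * p := by rw [hpθp, hθpp]

/-- Let `B` be a *-subalgebra of `B(K)`, `p ∈ B` an orthogonal
projection, and `T` a linear, positive, unital map on the corner `p B p ≅ B(H)`.
If `θ` is a unital *-endomorphism of `B` dilating `T` weakly, i.e.
`T(a) = p θ(a) p` for all `a ∈ p B p`, then the dilation is automatically strong: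
`T(p b p) = p θ(b) p` for all `b ∈ B`. -/
theorem unital_dilation_is_strong
    {K : Type*} [NormedAddCommGroup K] [InnerProductSpace ℂ K] [CompleteSpace K]
    (B : StarSubalgebra ℂ (K →L[ℂ] K))
    (p : K →L[ℂ] K) (hpB : p ∈ B) (hp : IsSelfAdjoint p) (hp2 : p * p = p)
    (θ : (K →L[ℂ] K) → (K →L[ℂ] K))
    (hθB : ∀ b ∈ B, θ b ∈ B)
    (hθadd : ∀ a b, θ (a + b) = θ a + θ b)
    (hθmul : ∀ a b, θ (a * b) = θ a * θ b)
    (hθstar : ∀ a, θ (star a) = star (θ a))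
    (hθone : θ 1 = 1)
    (T : (K →L[ℂ] K) → (K →L[ℂ] K))
    (hTadd : ∀ a b, T (a + b) = T a + T b)
    (hTsmul : ∀ (c : ℂ) a, T (c • a) = c • T a)
    (hTpos : ∀ a : K →L[ℂ] K, a.IsPositive → (T a).IsPositive)
    (hTunital : T p = p)
    (hweak : ∀ a ∈ B, a = p * a * p → T a = p * θ a * p) :
    ∀ b ∈ B, T (p * b * p) = p * θ b * p :=
  unital_dilation_is_strong_general B p hpB hp hp2 θ hθmul hθstar T hTunital hweak
end

section
/- Let K be a Hilbert space, H ⊆ K a closed subspace with projection p, and suppose B ⊆ B(K) is a von Neumann algebra with pBp = B(H) (as operators on H) and such that the closed span of {θ_{s_1}(a_1)⋯θ_{s_k}(a_k)h : h ∈ H, a_i ∈ B(H)} equals K, where each θ_s is a normal *-endomorphism of B. If q ∈ B' is a projection commuting with all operators in B, then q = 0 or q = I_K. Hence B' = ℂ·I_K and B = B(K). -/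
/-!
Let `q` commute with `B`. Since `B` contains every operator supported on `H`, in particular the
rank-one operators `x ↦ ⟪h₂, x⟫ h₁` with `h₁, h₂ ∈ H`, `q` acts on `H` as a scalar `c`. Since `q`
also commutes with every product `θ_{s₁}(a₁) ⋯ θ_{sₖ}(aₖ) ∈ B`, it equals `c` on every vector
`θ_{s₁}(a₁) ⋯ θ_{sₖ}(aₖ) h`, and these span a dense subspace of `K`; hence `q = c • 1`.
So `B' = ℂ • 1`, its projections are `0` and `1`, and `B = B'' = B(K)`.
-/

open scoped InnerProductSpace

namespace ContinuousLinearMap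

variable {K : Type*} [NormedAddCommGroup K] [InnerProductSpace ℂ K] [CompleteSpace K]

lemma rankOne_eq_mul_mul_of_isSelfAdjoint {p : K →L[ℂ] K} (hp : IsSelfAdjoint p)
    {h₁ h₂ : K} (hh₁ : p h₁ = h₁) (hh₂ : p h₂ = h₂) :
    (innerSL ℂ h₂).smulRight h₁ = p * (innerSL ℂ h₂).smulRight h₁ * p := by
  ext x
  have hinner : ⟪h₂, p x⟫_ℂ = ⟪h₂, x⟫_ℂ := by
    rw [← adjoint_inner_left, hp.adjoint_eq, hh₂]
  simp [hinner, hh₁]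

lemma exists_apply_eq_smul_of_commute_corner {p : K →L[ℂ] K}
    (hp : IsSelfAdjoint p) {u : K →L[ℂ] K}
    (hcomm : ∀ a : K →L[ℂ] K, a = p * a * p → u * a = a * u) :
    ∃ c : ℂ, ∀ h : K, p h = h → u h = c • h := by
  by_cases hex : ∃ h₂ : K, p h₂ = h₂ ∧ h₂ ≠ 0
  · obtain ⟨h₂, hh₂, hne⟩ := hex
    refine ⟨(⟪h₂, h₂⟫_ℂ)⁻¹ * ⟪h₂, u h₂⟫_ℂ, fun h₁ hh₁ => ?_⟩
    have hcomm₂ := congrArg (fun f : K →L[ℂ] K => f h₂)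
      (hcomm _ (rankOne_eq_mul_mul_of_isSelfAdjoint hp hh₁ hh₂))
    simp only [mul_apply_eq_comp, smulRight_apply, innerSL_apply_apply, map_smul] at hcomm₂
    have hnorm : ⟪h₂, h₂⟫_ℂ ≠ 0 := inner_self_ne_zero.mpr hne
    rw [mul_smul, ← hcomm₂, smul_smul, inv_mul_cancel₀ hnorm, one_smul]
  · push Not at hex
    exact ⟨0, fun h hh => by simp [hex h hh]⟩

lemma exists_eq_smul_one_of_commute_corner {p q : K →L[ℂ] K} (hp : IsSelfAdjoint p)
    (hcomm : ∀ a : K →L[ℂ] K, a = p * a * p → q * a = a * q) {s : Set K}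
    (hs : (Submodule.span ℂ s).topologicalClosure = ⊤)
    (hsq : ∀ x ∈ s, ∃ (t : K →L[ℂ] K) (h : K), Commute q t ∧ p h = h ∧ x = t h) :
    ∃ c : ℂ, q = c • 1 := by
  obtain ⟨c, hc⟩ := exists_apply_eq_smul_of_commute_corner hp hcomm
  refine ⟨c, ext_on (Submodule.dense_iff_topologicalClosure_eq_top.mpr hs) ?_⟩
  intro x hx
  obtain ⟨t, h, hqt, hh, rfl⟩ := hsq x hx
  calc q (t h) = t (q h) := congrArg (· h) hqt.eq
    _ = (c • (1 : K →L[ℂ] K)) (t h) := by simp [hc h hh]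

end ContinuousLinearMap

lemma Algebra.smul_one_eq_zero_or_one_of_isIdempotentElem {𝕜 A : Type*} [Field 𝕜] [Ring A]
    [Algebra 𝕜 A] {c : 𝕜} (hc : IsIdempotentElem (c • (1 : A))) :
    c • (1 : A) = 0 ∨ c • (1 : A) = 1 := by
  rcases subsingleton_or_nontrivial A with _ | _
  · exact Or.inl (Subsingleton.elim _ _)
  rw [← Algebra.algebraMap_eq_smul_one] at hc ⊢
  have hc' : IsIdempotentElem c := (algebraMap 𝕜 A).injective <| by
    rw [map_mul]; exact hc
  rcases IsIdempotentElem.iff_eq_zero_or_one.mp hc' with rfl | rfl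
  · exact Or.inl (map_zero _)
  · exact Or.inr (map_one _)

namespace VonNeumannAlgebra

variable {K : Type*} [NormedAddCommGroup K] [InnerProductSpace ℂ K] [CompleteSpace K]

lemma mem_of_commutant_eq_scalars (B : VonNeumannAlgebra K)
    (hB : ∀ x ∈ B.commutant, ∃ c : ℂ, x = c • (1 : K →L[ℂ] K)) (x : K →L[ℂ] K) : x ∈ B := by
  rw [← B.commutant_commutant, mem_commutant_iff]
  intro y hy
  obtain ⟨c, rfl⟩ := hB y hy
  rw [smul_mul_assoc, one_mul, mul_smul_comm, mul_one]

end VonNeumannAlgebra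

theorem minimal_dilation_acts_on_BK_general
    {K S : Type*} [NormedAddCommGroup K] [InnerProductSpace ℂ K] [CompleteSpace K]
    (p : K →L[ℂ] K) (hp : IsSelfAdjoint p)
    (B : VonNeumannAlgebra K)
    (hcorner : ∀ a : K →L[ℂ] K, a = p * a * p → a ∈ B)
    (θ : S → (K →L[ℂ] K) → (K →L[ℂ] K))
    (hθB : ∀ s, ∀ b ∈ B, θ s b ∈ B)
    (hspan : (Submodule.span ℂ
        {x : K | ∃ (n : ℕ) (s : Fin n → S) (a : Fin n → (K →L[ℂ] K)) (h : K),
          (∀ i, a i = p * a i * p) ∧ p h = h ∧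
          x = (List.ofFn fun i => θ (s i) (a i)).prod h}).topologicalClosure = ⊤) :
    (∀ q ∈ B.commutant, IsSelfAdjoint q → q * q = q → q = 0 ∨ q = 1) ∧
    (∀ x ∈ B.commutant, ∃ c : ℂ, x = c • (1 : K →L[ℂ] K)) ∧
    (∀ x : K →L[ℂ] K, x ∈ B) := by
  have hscalar : ∀ q ∈ B.commutant, ∃ c : ℂ, q = c • (1 : K →L[ℂ] K) := by
    intro q hq
    rw [VonNeumannAlgebra.mem_commutant_iff] at hq
    refine ContinuousLinearMap.exists_eq_smul_one_of_commute_corner hp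
      (fun a ha => (hq a (hcorner a ha)).symm) hspan ?_
    rintro _ ⟨n, s, a, h, ha, hh, rfl⟩
    have hprod : (List.ofFn fun i => θ (s i) (a i)).prod ∈ B :=
      list_prod_mem fun b hb => by
        obtain ⟨i, rfl⟩ := List.mem_ofFn.mp hb
        exact hθB _ _ (hcorner _ (ha i))
    exact ⟨_, h, (hq _ hprod).symm, hh, rfl⟩
  refine ⟨fun q hq _ hq2 => ?_, hscalar, B.mem_of_commutant_eq_scalars hscalar⟩
  obtain ⟨c, rfl⟩ := hscalar q hq
  exact Algebra.smul_one_eq_zero_or_one_of_isIdempotentElem hq2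

/-- Let `K` be a Hilbert space, `p` the projection onto a closed
subspace `H`, and `B ⊆ B(K)` a von Neumann algebra containing `p` whose corner
`p B p` is all of `B(H)` (every operator supported on `H` belongs to `B`).
Let `θ_s` (for `s` in a commutative monoid `S`) be *-endomorphisms of `B`, and
suppose the closed span of `{θ_{s_1}(a_1) ⋯ θ_{s_k}(a_k) h : h ∈ H, a_i ∈ B(H)}`
is all of `K`. Then every projection `q` in the commutant `B'` is `0` or `1`;
hence `B' = ℂ·1` and `B = B(K)`. -/
theorem minimal_dilation_acts_on_BK
    {K S : Type*} [NormedAddCommGroup K] [InnerProductSpace ℂ K] [CompleteSpace K]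
    [AddCommMonoid S]
    (p : K →L[ℂ] K) (hp : IsSelfAdjoint p) (hp2 : p * p = p)
    (B : VonNeumannAlgebra K)
    (hpB : p ∈ B)
    (hcorner : ∀ a : K →L[ℂ] K, a = p * a * p → a ∈ B)
    (θ : S → (K →L[ℂ] K) → (K →L[ℂ] K))
    (hθB : ∀ s, ∀ b ∈ B, θ s b ∈ B)
    (hθadd : ∀ s a b, θ s (a + b) = θ s a + θ s b)
    (hθmul : ∀ s a b, θ s (a * b) = θ s a * θ s b)
    (hθstar : ∀ s a, θ s (star a) = star (θ s a))
    (hspan : (Submodule.span ℂ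
        {x : K | ∃ (n : ℕ) (s : Fin n → S) (a : Fin n → (K →L[ℂ] K)) (h : K),
          (∀ i, a i = p * a i * p) ∧ p h = h ∧
          x = (List.ofFn fun i => θ (s i) (a i)).prod h}).topologicalClosure = ⊤) :
    (∀ q ∈ B.commutant, IsSelfAdjoint q → q * q = q → q = 0 ∨ q = 1) ∧
    (∀ x ∈ B.commutant, ∃ c : ℂ, x = c • (1 : K →L[ℂ] K)) ∧
    (∀ x : K →L[ℂ] K, x ∈ B) :=
  minimal_dilation_acts_on_BK_general p hp B hcorner θ hθB hspan
end

section
/- Let T be a contractive positive linear map on B(H) and T̃ its unitalization on B(H ⊕ ℂ). If (p̃, K̃, B̃, θ̃) is a strong dilation of T̃, then with q the image in B̃ of the projection 0 ⊕ 1_ℂ ∈ B(H⊕ℂ), one has θ̃_s(q) ≥ q for all s, and consequently the corner B = (1−q)B̃(1−q) is invariant under every θ̃_s. -/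
open scoped ComplexOrder

/-- A map `T : B(E) → B(F)` is completely positive if for all `n`, all
`a_1, …, a_n ∈ B(E)` and `v_1, …, v_n ∈ F`, `Σ_{i,j} ⟪v_i, T(a_i* a_j) v_j⟫ ≥ 0`. -/
def IsCompletelyPositive {E F : Type*}
    [NormedAddCommGroup E] [InnerProductSpace ℂ E] [CompleteSpace E]
    [NormedAddCommGroup F] [InnerProductSpace ℂ F]
    (T : (E →L[ℂ] E) → (F →L[ℂ] F)) : Prop :=
  ∀ (n : ℕ) (a : Fin n → (E →L[ℂ] E)) (v : Fin n → F),
    0 ≤ ∑ i, ∑ j, (inner ℂ (v i) ((T (star (a i) * a j)) (v j)) : ℂ)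


noncomputable section
open ContinuousLinearMap

variable (H : Type*) [NormedAddCommGroup H] [InnerProductSpace ℂ H] [CompleteSpace H]

/-- The Hilbert space `H ⊕ ℂ`. -/
abbrev Hplus := WithLp 2 (H × ℂ)

variable {H}

/-- Inclusion of `H` into `H ⊕ ℂ`. -/
def inclH : H →L[ℂ] Hplus H :=
  (WithLp.prodContinuousLinearEquiv 2 ℂ H ℂ).symm.toContinuousLinearMap ∘L
    ContinuousLinearMap.inl ℂ H ℂ

/-- Projection of `H ⊕ ℂ` onto `H`. -/
def projH : Hplus H →L[ℂ] H :=
  ContinuousLinearMap.fst ℂ H ℂ ∘L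
    (WithLp.prodContinuousLinearEquiv 2 ℂ H ℂ).toContinuousLinearMap

/-- Inclusion of `ℂ` into `H ⊕ ℂ`. -/
def inclC : ℂ →L[ℂ] Hplus H :=
  (WithLp.prodContinuousLinearEquiv 2 ℂ H ℂ).symm.toContinuousLinearMap ∘L
    ContinuousLinearMap.inr ℂ H ℂ

/-- Projection of `H ⊕ ℂ` onto `ℂ`. -/
def projC : Hplus H →L[ℂ] ℂ :=
  ContinuousLinearMap.snd ℂ H ℂ ∘L
    (WithLp.prodContinuousLinearEquiv 2 ℂ H ℂ).toContinuousLinearMap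

/-- The block-diagonal operator `[[X, 0], [0, c]]` on `H ⊕ ℂ`. -/
def blockDiag (X : H →L[ℂ] H) (c : ℂ) : Hplus H →L[ℂ] Hplus H :=
  inclH ∘L X ∘L projH + c • (inclC ∘L projC)

/-- The unitalization `T̃` of a map `T` on `B(H)`, acting on `B(H ⊕ ℂ)` by
`T̃([[A, h], [g*, c]]) = [[T(A) + c(1 - T(1)), 0], [0, c]]`. -/
def unitalization (T : (H →L[ℂ] H) → (H →L[ℂ] H))
    (M : Hplus H →L[ℂ] Hplus H) : Hplus H →L[ℂ] Hplus H :=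
  blockDiag (T (projH ∘L M ∘L inclH) + (projC (M (inclC 1))) • (1 - T 1))
    (projC (M (inclC 1)))

/-! Put `q₀ = 0 ⊕ 1` and `q = ι q₀`. Compressing the dilation identity by `q` gives
`q θ(q) q = ι (q₀ T̃(q₀) q₀) = q`, because `T̃` keeps the scalar entry of `q₀`. For two
projections in a C*-algebra, `q r q = q` forces `r q = q`, so `q ≤ θ(q)` and `θ(q) - q` is a
projection, hence positive. Taking complements, `θ(1 - q) = 1 - θ(q) ≤ 1 - q`, so `θ` maps the
corner `(1 - q) B̃ (1 - q)` into itself. -/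

/-- The element `x = r p - p` satisfies `x⋆ x = p r p - p = 0`. -/
theorem IsStarProjection.mul_eq_right_of_mul_mul_eq_s18 {A : Type*} [NonUnitalNormedRing A]
    [StarRing A] [CStarRing A] {p r : A} (hp : IsStarProjection p) (hr : IsStarProjection r)
    (hprp : p * r * p = p) : r * p = p := by
  have hstar : star (r * p - p) = p * r - p := by
    rw [star_sub, star_mul, hp.isSelfAdjoint.star_eq, hr.isSelfAdjoint.star_eq]
  have hexpand : (p * r - p) * (r * p - p) = p * (r * r) * p - p * r * p - p * r * p + p * p := by
    noncomm_ring
  have hzero : star (r * p - p) * (r * p - p) = 0 := by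
    rw [hstar, hexpand, hr.isIdempotentElem.eq, hprp, hp.isIdempotentElem.eq]
    abel
  exact sub_eq_zero.mp ((CStarRing.star_mul_self_eq_zero_iff _).mp hzero)

theorem eq_mul_mul_of_eq_mul_mul {R : Type*} [Semigroup R] {e f x : R} (hef : e * f = f)
    (hfe : f * e = f) (hx : x = f * x * f) : x = e * x * e :=
  calc x = f * x * f := hx
    _ = e * f * x * (f * e) := by rw [hef, hfe]
    _ = e * (f * x * f) * e := by simp only [mul_assoc]
    _ = e * x * e := by rw [← hx]

section BlockDiag

variable {E : Type*} [NormedAddCommGroup E] [InnerProductSpace ℂ E]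

theorem blockDiag_mul_blockDiag (X Y : E →L[ℂ] E) (c d : ℂ) :
    blockDiag X c * blockDiag Y d = blockDiag (X * Y) (c * d) := by
  ext x; simp [blockDiag, inclC, projC, inclH, projH, mul_smul, ← WithLp.toLp_smul]

theorem projC_blockDiag_inclC (X : E →L[ℂ] E) (c z : ℂ) :
    projC (blockDiag X c (inclC z)) = c * z := by
  simp [blockDiag, inclC, projC, inclH, projH]

theorem isSelfAdjoint_blockDiag [CompleteSpace E] {X : E →L[ℂ] E} {c : ℂ}
    (hX : IsSelfAdjoint X) (hc : IsSelfAdjoint c) : IsSelfAdjoint (blockDiag X c) := by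
  rw [ContinuousLinearMap.isSelfAdjoint_iff_isSymmetric]
  intro x y
  have hc' : (starRingEnd ℂ) c = c := hc
  simp only [blockDiag, inclC, projC, inclH, projH, WithLp.prod_inner_apply]
  have hXsymm : inner ℂ (X x.fst) y.fst = inner ℂ x.fst (X y.fst) := hX.isSymmetric _ _
  simp [hXsymm, hc']
  ring

theorem isStarProjection_blockDiag_zero_one [CompleteSpace E] :
    IsStarProjection (blockDiag (0 : E →L[ℂ] E) 1) where
  isIdempotentElem := by
    rw [IsIdempotentElem, blockDiag_mul_blockDiag, mul_zero, mul_one]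
  isSelfAdjoint := isSelfAdjoint_blockDiag (.zero _) (.one _)

theorem blockDiag_zero_one_mul_unitalization_mul (T : (E →L[ℂ] E) → (E →L[ℂ] E)) :
    blockDiag 0 1 * unitalization T (blockDiag 0 1) * blockDiag 0 1 =
      blockDiag (0 : E →L[ℂ] E) 1 := by
  rw [unitalization, projC_blockDiag_inclC, blockDiag_mul_blockDiag, blockDiag_mul_blockDiag]
  simp

end BlockDiag

theorem unitalization_dilation_corner_invariant_general
    {H Kt : Type*} [NormedAddCommGroup H] [InnerProductSpace ℂ H] [CompleteSpace H]
    [NormedAddCommGroup Kt] [InnerProductSpace ℂ Kt] [CompleteSpace Kt]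
    (T : (H →L[ℂ] H) →ₗ[ℂ] (H →L[ℂ] H))
    (Bt : StarSubalgebra ℂ (Kt →L[ℂ] Kt))
    (pt : Kt →L[ℂ] Kt)
    -- the corner embedding `ι : B(H ⊕ ℂ) ≅ p̃ B̃ p̃ ⊆ B̃`
    (ι : (Hplus H →L[ℂ] Hplus H) → (Kt →L[ℂ] Kt))
    (hιB : ∀ a, ι a ∈ Bt)
    (hιmul : ∀ a b, ι (a * b) = ι a * ι b)
    (hιstar : ∀ a, ι (star a) = star (ι a))
    (hιone : ι 1 = pt)
    -- `θ̃`, a unital *-endomorphism of `B̃`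
    (θ : (Kt →L[ℂ] Kt) → (Kt →L[ℂ] Kt))
    (hθadd : ∀ a b, θ (a + b) = θ a + θ b)
    (hθmul : ∀ a b, θ (a * b) = θ a * θ b)
    (hθstar : ∀ a, θ (star a) = star (θ a))
    (hθone : θ 1 = 1)
    -- the strong dilation property: `T̃(p̃ b p̃) = p̃ θ̃(b) p̃` for all `b ∈ B̃`
    (hdil : ∀ b ∈ Bt, ∀ a, ι a = pt * b * pt →
      ι (unitalization (T : (H →L[ℂ] H) → (H →L[ℂ] H)) a) = pt * θ b * pt) :
    (θ (ι (blockDiag (0 : H →L[ℂ] H) 1)) - ι (blockDiag (0 : H →L[ℂ] H) 1)).IsPositive ∧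
    ∀ b ∈ Bt,
      b = (1 - ι (blockDiag (0 : H →L[ℂ] H) 1)) * b * (1 - ι (blockDiag (0 : H →L[ℂ] H) 1)) →
      θ b = (1 - ι (blockDiag (0 : H →L[ℂ] H) 1)) * θ b *
        (1 - ι (blockDiag (0 : H →L[ℂ] H) 1)) := by
  have hq0 : IsStarProjection (blockDiag (0 : H →L[ℂ] H) 1) := isStarProjection_blockDiag_zero_one
  set q := ι (blockDiag (0 : H →L[ℂ] H) 1) with hq
  have hqproj : IsStarProjection q :=
    ⟨by rw [IsIdempotentElem, hq, ← hιmul, hq0.isIdempotentElem.eq],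
      by rw [IsSelfAdjoint, hq, ← hιstar, hq0.isSelfAdjoint.star_eq]⟩
  have hθqproj : IsStarProjection (θ q) :=
    ⟨by rw [IsIdempotentElem, ← hθmul, hqproj.isIdempotentElem.eq],
      by rw [IsSelfAdjoint, ← hθstar, hqproj.isSelfAdjoint.star_eq]⟩
  have hptq : pt * q = q := by rw [← hιone, hq, ← hιmul, one_mul]
  have hqpt : q * pt = q := by rw [← hιone, hq, ← hιmul, mul_one]
  have hcompress : q * θ q * q = q :=
    calc q * θ q * q = q * pt * θ q * (pt * q) := by rw [hqpt, hptq]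
      _ = ι (blockDiag 0 1 * unitalization T (blockDiag 0 1) * blockDiag 0 1) := by
        rw [hιmul, hιmul, ← hq, hdil q (hιB _) _ (by rw [hptq, hqpt])]
        simp only [mul_assoc]
      _ = q := by rw [blockDiag_zero_one_mul_unitalization_mul]
  have hθq : θ q * q = q := hqproj.mul_eq_right_of_mul_mul_eq_s18 hθqproj hcompress
  have hqθ : q * θ q = q := by
    simpa [hqproj.isSelfAdjoint.star_eq, hθqproj.isSelfAdjoint.star_eq] using congr(star $hθq)
  refine ⟨.of_isStarProjection (hqproj.sub_of_mul_eq_right hθqproj hθq), fun b _ hb => ?_⟩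
  have hθ1q : θ (1 - q) = 1 - θ q := eq_sub_of_add_eq (by rw [← hθadd, sub_add_cancel, hθone])
  refine eq_mul_mul_of_eq_mul_mul (f := 1 - θ q) ?_ ?_ (by rw [← hθ1q, ← hθmul, ← hθmul, ← hb])
  · simp only [mul_sub, sub_mul, one_mul, mul_one, hqθ]
    abel
  · simp only [mul_sub, sub_mul, one_mul, mul_one, hθq]
    abel

/-- Let `T` be a contractive positive linear map on `B(H)` and `T̃`
its unitalization on `B(H ⊕ ℂ)`. Suppose `(p̃, K̃, B̃, θ̃)` is a strong dilation of
`T̃`, with `ι : B(H ⊕ ℂ) → p̃ B̃ p̃` the corner embedding. Let `q = ι([[0,0],[0,1]])`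
be the image of `0 ⊕ 1_ℂ`. Then `θ̃(q) ≥ q`, and consequently the corner
`(1-q) B̃ (1-q)` is invariant under `θ̃`. -/
theorem unitalization_dilation_corner_invariant
    {H Kt : Type*} [NormedAddCommGroup H] [InnerProductSpace ℂ H] [CompleteSpace H]
    [NormedAddCommGroup Kt] [InnerProductSpace ℂ Kt] [CompleteSpace Kt]
    (T : (H →L[ℂ] H) →ₗ[ℂ] (H →L[ℂ] H))
    (hTpos : ∀ a : H →L[ℂ] H, a.IsPositive → (T a).IsPositive)
    (hTcontr : ∀ a : H →L[ℂ] H, ‖T a‖ ≤ ‖a‖)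
    (Bt : StarSubalgebra ℂ (Kt →L[ℂ] Kt))
    (pt : Kt →L[ℂ] Kt) (hptB : pt ∈ Bt) (hpt : IsSelfAdjoint pt) (hpt2 : pt * pt = pt)
    -- the corner embedding `ι : B(H ⊕ ℂ) ≅ p̃ B̃ p̃ ⊆ B̃`
    (ι : (Hplus H →L[ℂ] Hplus H) → (Kt →L[ℂ] Kt))
    (hιB : ∀ a, ι a ∈ Bt)
    (hιadd : ∀ a b, ι (a + b) = ι a + ι b)
    (hιsmul : ∀ (c : ℂ) a, ι (c • a) = c • ι a)
    (hιmul : ∀ a b, ι (a * b) = ι a * ι b)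
    (hιstar : ∀ a, ι (star a) = star (ι a))
    (hιinj : Function.Injective ι)
    (hιone : ι 1 = pt)
    (hιsurj : ∀ b ∈ Bt, ∃ a, ι a = pt * b * pt)
    -- `θ̃`, a unital *-endomorphism of `B̃`
    (θ : (Kt →L[ℂ] Kt) → (Kt →L[ℂ] Kt))
    (hθB : ∀ b ∈ Bt, θ b ∈ Bt)
    (hθadd : ∀ a b, θ (a + b) = θ a + θ b)
    (hθmul : ∀ a b, θ (a * b) = θ a * θ b)
    (hθstar : ∀ a, θ (star a) = star (θ a))
    (hθone : θ 1 = 1)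
    -- the strong dilation property: `T̃(p̃ b p̃) = p̃ θ̃(b) p̃` for all `b ∈ B̃`
    (hdil : ∀ b ∈ Bt, ∀ a, ι a = pt * b * pt →
      ι (unitalization (T : (H →L[ℂ] H) → (H →L[ℂ] H)) a) = pt * θ b * pt) :
    (θ (ι (blockDiag (0 : H →L[ℂ] H) 1)) - ι (blockDiag (0 : H →L[ℂ] H) 1)).IsPositive ∧
    ∀ b ∈ Bt,
      b = (1 - ι (blockDiag (0 : H →L[ℂ] H) 1)) * b * (1 - ι (blockDiag (0 : H →L[ℂ] H) 1)) →
      θ b = (1 - ι (blockDiag (0 : H →L[ℂ] H) 1)) * θ b *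
        (1 - ι (blockDiag (0 : H →L[ℂ] H) 1)) :=
  unitalization_dilation_corner_invariant_general T Bt pt ι hιB hιmul hιstar hιone θ hθadd hθmul
    hθstar hθone hdil
end
end
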